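/- Let x and y be positive real numbers. Define f(u,v) = u^{−3/2} + v^{−3/2} for u, v > 0 and φ(u,v) = ((x u + y v)/(x+y) − x y, (y u + x v)/(x+y) − x y). Then the system f(u,v) = f(x², y²) and f(φ(u,v)) = f(x², y²), considered for (u,v) in the open positive quadrant with both coordinates of φ(u,v) positive, has exactly two solutions, and they are of the form (u₀, v₀) and (v₀, u₀) with u₀ ≠ v₀. -/

import Mathlib

/-!
Write `C = f(x², y²)` and parametrize the level set `f = C` of the positive quadrant by
`a = u^(-3/2) ∈ (0, C)`, i.e. `(u, v) = (a^(-2/3), (C - a)^(-2/3))`. Along this curve the two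
coordinates `P(a)`, `Q(a)` of `φ(u, v)` are convex in `a`, are exchanged by `a ↦ C - a`, tend to
`+∞` as `a → 0`, and are `≤ 0` at `a = C/2` by AM-GM. By convexity `P` and `Q` strictly decrease
wherever they are positive on `(0, C/2]`, so `f(φ) = P^(-3/2) + Q^(-3/2)` strictly increases there.
It tends to `0` at `a = 0` and exceeds `C` where `min(P, Q) = C^(-2/3)`, so it takes the value `C`
exactly once on `(0, C/2)`; the reflection `a ↦ C - a` gives the second solution.
-/

/-- f(u, v) = u⁻³ᐟ² + v⁻³ᐟ². -/
noncomputable def fInvPow (p : ℝ × ℝ) : ℝ :=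
  p.1 ^ (-(3 / 2 : ℝ)) + p.2 ^ (-(3 / 2 : ℝ))

/-- The affine map φ(u, v) = ((xu + yv)/(x+y) - xy, (yu + xv)/(x+y) - xy). -/
noncomputable def phiMap (x y : ℝ) (p : ℝ × ℝ) : ℝ × ℝ :=
  ((x * p.1 + y * p.2) / (x + y) - x * y, (y * p.1 + x * p.2) / (x + y) - x * y)

open Real Set Filter Topology

theorem convexOn_rpow_of_nonpos {p : ℝ} (hp : p ≤ 0) :
    ConvexOn ℝ (Ioi 0) fun t : ℝ ↦ t ^ p := by
  refine MonotoneOn.convexOn_of_deriv (convex_Ioi 0)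
    (continuousOn_id.rpow_const fun _ ht ↦ Or.inl (ne_of_gt ht))
    (fun t ht ↦
      (differentiableAt_rpow_const_of_ne p (interior_subset ht).ne').differentiableWithinAt) ?_
  rw [interior_Ioi]
  intro s hs t _ hst
  rw [Real.deriv_rpow_const, Real.deriv_rpow_const]
  exact mul_le_mul_of_nonpos_left (rpow_le_rpow_of_nonpos hs hst (by linarith)) hp

theorem ConvexOn.comp_const_sub {s : Set ℝ} {f : ℝ → ℝ} (hf : ConvexOn ℝ s f) (c : ℝ) :
    ConvexOn ℝ ((c - ·) ⁻¹' s) fun t ↦ f (c - t) :=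
  hf.comp_affineMap (AffineMap.const ℝ ℝ c - AffineMap.id ℝ ℝ)

namespace TrapezoidCC

noncomputable def levelCurve (C a : ℝ) : ℝ × ℝ :=
  (a ^ (-(2 / 3 : ℝ)), (C - a) ^ (-(2 / 3 : ℝ)))

def levelSet (C : ℝ) : Set (ℝ × ℝ) :=
  {p | 0 < p.1 ∧ 0 < p.2 ∧ fInvPow p = C}

lemma rpow_neg_two_thirds_rpow {t : ℝ} (ht : 0 < t) :
    (t ^ (-(2 / 3 : ℝ))) ^ (-(3 / 2 : ℝ)) = t := by
  rw [← rpow_mul ht.le]; norm_num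

lemma rpow_neg_three_halves_rpow {t : ℝ} (ht : 0 < t) :
    (t ^ (-(3 / 2 : ℝ))) ^ (-(2 / 3 : ℝ)) = t := by
  rw [← rpow_mul ht.le]; norm_num

lemma fInvPow_swap (p : ℝ × ℝ) : fInvPow p.swap = fInvPow p := add_comm _ _

lemma swap_mem_levelSet {C : ℝ} {p : ℝ × ℝ} (hp : p ∈ levelSet C) : p.swap ∈ levelSet C :=
  ⟨hp.2.1, hp.1, (fInvPow_swap p).trans hp.2.2⟩

lemma levelCurve_const_sub (C a : ℝ) : levelCurve C (C - a) = (levelCurve C a).swap := by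
  rw [levelCurve, levelCurve, sub_sub_cancel]; rfl

lemma fst_levelCurve_rpow {C a : ℝ} (ha : 0 < a) : (levelCurve C a).1 ^ (-(3 / 2 : ℝ)) = a :=
  rpow_neg_two_thirds_rpow ha

lemma image_levelCurve_Ioo (C : ℝ) : levelCurve C '' Ioo 0 C = levelSet C := by
  ext p
  constructor
  · rintro ⟨a, ⟨ha, haC⟩, rfl⟩
    have hCa : 0 < C - a := sub_pos.2 haC
    refine ⟨rpow_pos_of_pos ha _, rpow_pos_of_pos hCa _, ?_⟩
    simp only [fInvPow, levelCurve, rpow_neg_two_thirds_rpow ha, rpow_neg_two_thirds_rpow hCa]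
    ring
  · rintro ⟨h₁, h₂, hf⟩
    have hCa : C - p.1 ^ (-(3 / 2 : ℝ)) = p.2 ^ (-(3 / 2 : ℝ)) := by
      rw [← hf, fInvPow]; ring
    refine ⟨p.1 ^ (-(3 / 2 : ℝ)), ⟨rpow_pos_of_pos h₁ _, ?_⟩, ?_⟩
    · linarith [rpow_pos_of_pos h₂ (-(3 / 2 : ℝ))]
    · rw [levelCurve, hCa, rpow_neg_three_halves_rpow h₁, rpow_neg_three_halves_rpow h₂]

lemma phiMap_swap (x y : ℝ) (p : ℝ × ℝ) : phiMap x y p.swap = (phiMap x y p).swap := by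
  simp only [phiMap, Prod.fst_swap, Prod.snd_swap, Prod.swap_prod_mk, Prod.mk.injEq]
  constructor <;> ring

noncomputable def phiCoord (x y C a : ℝ) : ℝ :=
  (x * a ^ (-(2 / 3 : ℝ)) + y * (C - a) ^ (-(2 / 3 : ℝ))) / (x + y) - x * y

lemma phiMap_levelCurve (x y C a : ℝ) :
    phiMap x y (levelCurve C a) = (phiCoord x y C a, phiCoord y x C a) := by
  rw [phiMap, levelCurve, phiCoord, phiCoord, add_comm y x, mul_comm y x]

lemma phiCoord_const_sub (x y C a : ℝ) : phiCoord y x C (C - a) = phiCoord x y C a := by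
  rw [phiCoord, phiCoord, sub_sub_cancel, add_comm y x, mul_comm y x, add_comm (y * _)]

lemma convexOn_phiCoord {x y : ℝ} (hx : 0 ≤ x) (hy : 0 ≤ y) (C : ℝ) :
    ConvexOn ℝ (Ioo 0 C) (phiCoord x y C) := by
  have hg := convexOn_rpow_of_nonpos (p := -(2 / 3 : ℝ)) (by norm_num)
  have h₁ : ConvexOn ℝ (Ioo 0 C) fun a : ℝ ↦ a ^ (-(2 / 3 : ℝ)) :=
    hg.subset Ioo_subset_Ioi_self (convex_Ioo 0 C)
  have h₂ : ConvexOn ℝ (Ioo 0 C) fun a : ℝ ↦ (C - a) ^ (-(2 / 3 : ℝ)) :=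
    (hg.comp_const_sub C).subset (fun a ha ↦ sub_pos.2 ha.2) (convex_Ioo 0 C)
  have := (((h₁.smul hx).add (h₂.smul hy)).smul (inv_nonneg.2 (add_nonneg hx hy))).add_const
    (-(x * y))
  refine this.congr fun a _ ↦ ?_
  simp only [phiCoord, smul_eq_mul, Pi.add_apply]
  ring

lemma continuousOn_phiCoord {x y : ℝ} (hx : 0 ≤ x) (hy : 0 ≤ y) (C : ℝ) :
    ContinuousOn (phiCoord x y C) (Ioo 0 C) :=
  (convexOn_phiCoord hx hy C).continuousOn isOpen_Ioo

lemma phiCoord_half {x y : ℝ} (hxy : x + y ≠ 0) (C : ℝ) :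
    phiCoord x y C (C / 2) = (C / 2) ^ (-(2 / 3 : ℝ)) - x * y := by
  rw [phiCoord, show C - C / 2 = C / 2 by ring, ← add_mul, mul_div_cancel_left₀ _ hxy]

lemma phiCoord_half_comm (x y C : ℝ) : phiCoord y x C (C / 2) = phiCoord x y C (C / 2) := by
  simpa only [show C - C / 2 = C / 2 by ring] using phiCoord_const_sub x y C (C / 2)

lemma phiCoord_half_nonpos {x y : ℝ} (hx : 0 < x) (hy : 0 < y) :
    phiCoord x y (fInvPow (x ^ 2, y ^ 2)) (fInvPow (x ^ 2, y ^ 2) / 2) ≤ 0 := by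
  set s := x ^ (-(3 / 2 : ℝ))
  set t := y ^ (-(3 / 2 : ℝ))
  have hC : fInvPow (x ^ 2, y ^ 2) = s ^ 2 + t ^ 2 := by
    rw [fInvPow, ← rpow_pow_comm hx.le, ← rpow_pow_comm hy.le]
  have hst : (x * y) ^ (-(3 / 2 : ℝ)) = s * t := mul_rpow hx.le hy.le
  have hamgm : (x * y) ^ (-(3 / 2 : ℝ)) ≤ fInvPow (x ^ 2, y ^ 2) / 2 := by
    rw [hst, hC]; nlinarith [sq_nonneg (s - t)]
  have hxy : 0 < x * y := mul_pos hx hy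
  rw [phiCoord_half (by positivity), sub_nonpos]
  calc (fInvPow (x ^ 2, y ^ 2) / 2) ^ (-(2 / 3 : ℝ))
      ≤ ((x * y) ^ (-(3 / 2 : ℝ))) ^ (-(2 / 3 : ℝ)) :=
        rpow_le_rpow_of_nonpos (rpow_pos_of_pos hxy _) hamgm (by norm_num)
    _ = x * y := rpow_neg_three_halves_rpow hxy

lemma tendsto_phiCoord_nhdsGT_zero {x y C : ℝ} (hx : 0 < x) (hy : 0 ≤ y) (hC : 0 < C) :
    Tendsto (phiCoord x y C) (𝓝[>] 0) atTop := by
  have hxy : 0 < x + y := by linarith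
  have hlow : Tendsto (fun a : ℝ ↦ x / (x + y) * a ^ (-(2 / 3 : ℝ)) + -(x * y)) (𝓝[>] 0) atTop :=
    tendsto_atTop_add_const_right _ _
      ((tendsto_rpow_neg_nhdsGT_zero (by norm_num)).const_mul_atTop (div_pos hx hxy))
  refine tendsto_atTop_mono' _ ?_ hlow
  filter_upwards [Ioo_mem_nhdsGT hC] with a ha
  have hrest : 0 ≤ y * (C - a) ^ (-(2 / 3 : ℝ)) :=
    mul_nonneg hy (rpow_nonneg (sub_pos.2 ha.2).le _)
  rw [phiCoord, div_mul_eq_mul_div, ← sub_eq_add_neg]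
  gcongr
  exact le_add_of_nonneg_right hrest

lemma phiCoord_lt_of_lt {x y C a b : ℝ} (hx : 0 ≤ x) (hy : 0 ≤ y)
    (hhalf : phiCoord x y C (C / 2) ≤ 0) (ha : 0 < a) (hab : a < b) (hb : b ≤ C / 2)
    (hpos : 0 < phiCoord x y C b) : phiCoord x y C b < phiCoord x y C a := by
  have hb' : b < C / 2 := hb.lt_of_ne (by rintro rfl; linarith)
  refine (convexOn_phiCoord hx hy C).lt_left_of_right_lt (y := C / 2) ⟨ha, by linarith⟩
    ⟨by linarith, by linarith⟩ ?_ (by linarith)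
  rw [openSegment_eq_Ioo (hab.trans hb')]
  exact ⟨hab, hb'⟩

noncomputable def fInvPowPhi (x y C a : ℝ) : ℝ :=
  fInvPow (phiCoord x y C a, phiCoord y x C a)

def rootParams (x y C : ℝ) : Set ℝ :=
  Ioo 0 C ∩ levelCurve C ⁻¹' (phiMap x y ⁻¹' levelSet C)

lemma image_levelCurve_rootParams (x y C : ℝ) :
    levelCurve C '' rootParams x y C = levelSet C ∩ phiMap x y ⁻¹' levelSet C := by
  rw [rootParams, image_inter_preimage, image_levelCurve_Ioo]

lemma mem_rootParams {x y C a : ℝ} :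
    a ∈ rootParams x y C ↔ a ∈ Ioo 0 C ∧ 0 < phiCoord x y C a ∧ 0 < phiCoord y x C a ∧
      fInvPowPhi x y C a = C := by
  simp only [rootParams, mem_inter_iff, mem_preimage, phiMap_levelCurve, levelSet, mem_ofPred_eq,
    fInvPowPhi]

lemma const_sub_mem_rootParams {x y C a : ℝ} (h : a ∈ rootParams x y C) :
    C - a ∈ rootParams x y C := by
  refine ⟨⟨sub_pos.2 h.1.2, sub_lt_self C h.1.1⟩, ?_⟩
  rw [mem_preimage, levelCurve_const_sub, mem_preimage, phiMap_swap]
  exact swap_mem_levelSet h.2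

lemma half_notMem_rootParams {x y C : ℝ} (hhalf : phiCoord x y C (C / 2) ≤ 0) :
    C / 2 ∉ rootParams x y C :=
  fun h ↦ (mem_rootParams.1 h).2.1.not_ge hhalf

lemma continuousOn_fInvPowPhi {x y : ℝ} (hx : 0 ≤ x) (hy : 0 ≤ y) (C : ℝ) :
    ContinuousOn (fInvPowPhi x y C)
      {a | a ∈ Ioo 0 C ∧ 0 < phiCoord x y C a ∧ 0 < phiCoord y x C a} :=
  (((continuousOn_phiCoord hx hy C).mono fun _ h ↦ h.1).rpow_const fun _ h ↦
      Or.inl h.2.1.ne').add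
    (((continuousOn_phiCoord hy hx C).mono fun _ h ↦ h.1).rpow_const fun _ h ↦
      Or.inl h.2.2.ne')

lemma strictMonoOn_fInvPowPhi {x y C : ℝ} (hx : 0 ≤ x) (hy : 0 ≤ y)
    (hhalf : phiCoord x y C (C / 2) ≤ 0) :
    StrictMonoOn (fInvPowPhi x y C)
      {a | 0 < a ∧ a ≤ C / 2 ∧ 0 < phiCoord x y C a ∧ 0 < phiCoord y x C a} := by
  rintro a ⟨ha, -, hPa, hQa⟩ b ⟨-, hb, hPb, hQb⟩ hab
  have hhalf' : phiCoord y x C (C / 2) ≤ 0 := (phiCoord_half_comm x y C).trans_le hhalf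
  exact add_lt_add
    (rpow_lt_rpow_of_neg hPb (phiCoord_lt_of_lt hx hy hhalf ha hab hb hPb) (by norm_num))
    (rpow_lt_rpow_of_neg hQb (phiCoord_lt_of_lt hy hx hhalf' ha hab hb hQb) (by norm_num))

lemma eq_of_mem_rootParams_of_lt_half {x y C a b : ℝ} (hx : 0 ≤ x) (hy : 0 ≤ y)
    (hhalf : phiCoord x y C (C / 2) ≤ 0) (ha : a ∈ rootParams x y C) (hb : b ∈ rootParams x y C)
    (ha' : a < C / 2) (hb' : b < C / 2) : a = b := by
  rw [mem_rootParams] at ha hb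
  refine (strictMonoOn_fInvPowPhi hx hy hhalf).injOn ⟨ha.1.1, ha'.le, ha.2.1, ha.2.2.1⟩
    ⟨hb.1.1, hb'.le, hb.2.1, hb.2.2.1⟩ (ha.2.2.2.trans hb.2.2.2.symm)

lemma exists_lt_half_lt_fInvPowPhi {x y C : ℝ} (hx : 0 < x) (hy : 0 < y) (hC : 0 < C)
    (hhalf : phiCoord x y C (C / 2) ≤ 0) :
    ∃ r, 0 < r ∧ r < C / 2 ∧ C < fInvPowPhi x y C r ∧
      ∀ a ∈ Ioc 0 r, 0 < phiCoord x y C a ∧ 0 < phiCoord y x C a := by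
  set P := phiCoord x y C
  set Q := phiCoord y x C
  have hQhalf : Q (C / 2) ≤ 0 := (phiCoord_half_comm x y C).trans_le hhalf
  -- `ε ^ (-3/2) = C`, so a point where `min P Q = ε` lies above the level `C`
  set ε := C ^ (-(2 / 3 : ℝ))
  have hε : 0 < ε := rpow_pos_of_pos hC _
  obtain ⟨δ, ⟨hPδ, hQδ⟩, hδ⟩ :=
    ((((tendsto_phiCoord_nhdsGT_zero hx hy.le hC).eventually_gt_atTop ε).and
      ((tendsto_phiCoord_nhdsGT_zero hy hx.le hC).eventually_gt_atTop ε)).and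
      (Ioo_mem_nhdsGT (half_pos hC))).exists
  have hcont : ContinuousOn (fun a ↦ min (P a) (Q a)) (Icc δ (C / 2)) :=
    (ContinuousOn.inf (continuousOn_phiCoord hx.le hy.le C)
      (continuousOn_phiCoord hy.le hx.le C)).mono
      (Icc_subset_Ioo hδ.1 (by linarith))
  obtain ⟨r, hr, hmin⟩ := intermediate_value_Icc' hδ.2.le hcont
    ⟨((min_le_left _ _).trans hhalf).trans hε.le, le_min hPδ.le hQδ.le⟩
  beta_reduce at hmin
  have hr0 : 0 < r := hδ.1.trans_le hr.1
  have hr2 : r < C / 2 :=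
    hr.2.lt_of_ne (by rintro rfl; linarith [min_le_left (P (C / 2)) (Q (C / 2))])
  have hPr : 0 < P r := hε.trans_le (hmin ▸ min_le_left _ _)
  have hQr : 0 < Q r := hε.trans_le (hmin ▸ min_le_right _ _)
  refine ⟨r, hr0, hr2, ?_, fun a ha ↦ ?_⟩
  · have hεC : ε ^ (-(3 / 2 : ℝ)) = C := rpow_neg_two_thirds_rpow hC
    have hP := rpow_pos_of_pos hPr (-(3 / 2 : ℝ))
    have hQ := rpow_pos_of_pos hQr (-(3 / 2 : ℝ))
    change C < P r ^ (-(3 / 2 : ℝ)) + Q r ^ (-(3 / 2 : ℝ))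
    rcases min_choice (P r) (Q r) with h | h <;> rw [h] at hmin <;> rw [hmin, hεC] <;> linarith
  · obtain rfl | h := ha.2.eq_or_lt
    · exact ⟨hPr, hQr⟩
    · exact ⟨hPr.trans (phiCoord_lt_of_lt hx.le hy.le hhalf ha.1 h hr2.le hPr),
        hQr.trans (phiCoord_lt_of_lt hy.le hx.le hQhalf ha.1 h hr2.le hQr)⟩

lemma tendsto_fInvPowPhi_nhdsGT_zero {x y C : ℝ} (hx : 0 < x) (hy : 0 < y) (hC : 0 < C) :
    Tendsto (fInvPowPhi x y C) (𝓝[>] 0) (𝓝 0) := by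
  have h := ((tendsto_rpow_neg_atTop (by norm_num : (0 : ℝ) < 3 / 2)).comp
    (tendsto_phiCoord_nhdsGT_zero hx hy.le hC)).add
    ((tendsto_rpow_neg_atTop (by norm_num : (0 : ℝ) < 3 / 2)).comp
    (tendsto_phiCoord_nhdsGT_zero hy hx.le hC))
  rwa [add_zero] at h

lemma exists_mem_rootParams_lt_half {x y C : ℝ} (hx : 0 < x) (hy : 0 < y) (hC : 0 < C)
    (hhalf : phiCoord x y C (C / 2) ≤ 0) : ∃ a ∈ rootParams x y C, a < C / 2 := by
  obtain ⟨r, hr0, hr2, hGr, hpos⟩ := exists_lt_half_lt_fInvPowPhi hx hy hC hhalf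
  obtain ⟨l, hGl, hl⟩ := (((tendsto_fInvPowPhi_nhdsGT_zero hx hy hC).eventually
    (eventually_lt_nhds hC)).and (Ioo_mem_nhdsGT hr0)).exists
  have hsub : Icc l r ⊆ {a | a ∈ Ioo 0 C ∧ 0 < phiCoord x y C a ∧ 0 < phiCoord y x C a} :=
    fun a ha ↦ ⟨⟨hl.1.trans_le ha.1, by linarith [ha.2]⟩, hpos a ⟨hl.1.trans_le ha.1, ha.2⟩⟩
  obtain ⟨a, ha, hGa⟩ := intermediate_value_Icc hl.2.le
    ((continuousOn_fInvPowPhi hx.le hy.le C).mono hsub) ⟨hGl.le, hGr.le⟩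
  exact ⟨a, mem_rootParams.2 ⟨(hsub ha).1, (hsub ha).2.1, (hsub ha).2.2, hGa⟩, ha.2.trans_lt hr2⟩

lemma exists_rootParams_eq_pair {x y C : ℝ} (hx : 0 < x) (hy : 0 < y) (hC : 0 < C)
    (hhalf : phiCoord x y C (C / 2) ≤ 0) :
    ∃ a₀ < C / 2, rootParams x y C = {a₀, C - a₀} := by
  obtain ⟨a₀, h₀, ha₀⟩ := exists_mem_rootParams_lt_half hx hy hC hhalf
  refine ⟨a₀, ha₀, Set.ext fun a ↦ ⟨fun ha ↦ ?_, ?_⟩⟩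
  · rcases lt_trichotomy a (C / 2) with h | rfl | h
    · exact Or.inl (eq_of_mem_rootParams_of_lt_half hx.le hy.le hhalf ha h₀ h ha₀)
    · exact absurd ha (half_notMem_rootParams hhalf)
    · have := eq_of_mem_rootParams_of_lt_half hx.le hy.le hhalf (const_sub_mem_rootParams ha) h₀
        (by linarith) ha₀
      exact Or.inr (mem_singleton_iff.2 (by linarith))
  · rintro (rfl | rfl)
    exacts [h₀, const_sub_mem_rootParams h₀]

lemma fst_levelCurve_ne_snd {C a : ℝ} (ha : 0 < a) (haC : a < C) (h : a ≠ C - a) :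
    (levelCurve C a).1 ≠ (levelCurve C a).2 := by
  intro heq
  have hCa := fst_levelCurve_rpow (C := C) (sub_pos.2 haC)
  rw [levelCurve_const_sub, Prod.fst_swap, ← heq, fst_levelCurve_rpow ha] at hCa
  exact h hCa

end TrapezoidCC

open TrapezoidCC

/-- For x, y > 0, the system f(u, v) = f(x², y²), f(φ(u, v)) = f(x², y²), considered on
the open positive quadrant with both coordinates of φ(u, v) positive, has exactly two
solutions, of the form (u₀, v₀) and (v₀, u₀) with u₀ ≠ v₀. -/
theorem nonzero_multiplier_system_two_solutions (x y : ℝ) (hx : 0 < x) (hy : 0 < y) :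
    ∃ u₀ v₀ : ℝ, u₀ ≠ v₀ ∧
      {p : ℝ × ℝ | 0 < p.1 ∧ 0 < p.2 ∧ 0 < (phiMap x y p).1 ∧ 0 < (phiMap x y p).2 ∧
          fInvPow p = fInvPow (x ^ 2, y ^ 2) ∧
          fInvPow (phiMap x y p) = fInvPow (x ^ 2, y ^ 2)}
        = {(u₀, v₀), (v₀, u₀)} := by
  set C := fInvPow (x ^ 2, y ^ 2)
  have hC : 0 < C := add_pos (rpow_pos_of_pos (by positivity) _) (rpow_pos_of_pos (by positivity) _)
  obtain ⟨a₀, ha₀, hroots⟩ := exists_rootParams_eq_pair hx hy hC (phiCoord_half_nonpos hx hy)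
  have h₀ : a₀ ∈ rootParams x y C := hroots ▸ mem_insert a₀ _
  refine ⟨(levelCurve C a₀).1, (levelCurve C a₀).2,
    fst_levelCurve_ne_snd h₀.1.1 h₀.1.2 (by linarith), ?_⟩
  calc _ = levelSet C ∩ phiMap x y ⁻¹' levelSet C := by
          ext p
          simp only [levelSet, mem_inter_iff, mem_preimage, mem_ofPred_eq]
          tauto
    _ = levelCurve C '' {a₀, C - a₀} := by rw [← hroots, image_levelCurve_rootParams]
    _ = _ := by rw [image_pair, levelCurve_const_sub]; rfl
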